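/- arXiv:2404.16576 — 3 statements merged into one kernel-verified Lean document; each statement's English description precedes it below -/
import Mathlib

section
/- Let M and A be self-adjoint positive semidefinite operators on a finite-dimensional inner product space with M positive definite, let τ > 0 and θ ≥ 1/2. If vectors u^{n+1}, u^n satisfy M(u^{n+1}-u^n)/τ + A(θ u^{n+1} + (1-θ) u^n) = F, then ‖u^{n+1}‖_A² ≤ ‖u^n‖_A² + (τ/2)‖F‖²_{M^{-1}}. -/
open Matrix

theorem two_level_implicit_stability
    (N : ℕ) (M A : Matrix (Fin N) (Fin N) ℝ)
    (hM : M.PosDef) (hA : A.PosSemidef)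
    (τ θ : ℝ) (hτ : 0 < τ) (hθ : 1/2 ≤ θ)
    (u1 u0 F : Fin N → ℝ)
    (hscheme : M.mulVec ((1/τ) • (u1 - u0)) + A.mulVec (θ • u1 + (1-θ) • u0) = F) :
    A.mulVec u1 ⬝ᵥ u1 ≤ A.mulVec u0 ⬝ᵥ u0 + (τ/2) * (M⁻¹.mulVec F ⬝ᵥ F) := by
  -- symmetry helper
  have hsym : ∀ (B : Matrix (Fin N) (Fin N) ℝ), Bᵀ = B → ∀ x y : Fin N → ℝ,
      B.mulVec x ⬝ᵥ y = B.mulVec y ⬝ᵥ x := by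
    intro B hB x y
    rw [dotProduct_comm, Matrix.dotProduct_mulVec, ← Matrix.mulVec_transpose, hB]
  have hAsym := hsym A hA.1
  have hMsym := hsym M hM.1
  have hMposd : ∀ x : Fin N → ℝ, 0 ≤ M.mulVec x ⬝ᵥ x := by
    intro x
    simpa [dotProduct_comm] using hM.posSemidef.dotProduct_mulVec_nonneg x
  have hinv : M.mulVec (M⁻¹.mulVec F) = F := by
    rw [Matrix.mulVec_mulVec, Matrix.mul_nonsing_inv _ hM.det_pos.ne'.isUnit,
      Matrix.one_mulVec]
  set d : Fin N → ℝ := u1 - u0 with hd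
  set a11 : ℝ := A.mulVec u1 ⬝ᵥ u1
  set a00 : ℝ := A.mulVec u0 ⬝ᵥ u0
  set a01 : ℝ := A.mulVec u1 ⬝ᵥ u0 with ha01
  set m : ℝ := M.mulVec d ⬝ᵥ d
  set fd : ℝ := F ⬝ᵥ d
  set g : ℝ := M⁻¹.mulVec F ⬝ᵥ F
  have h10 : A.mulVec u0 ⬝ᵥ u1 = a01 := hAsym u0 u1
  -- expand the A-part of the scheme dotted with d
  have hAexp : A.mulVec (θ • u1 + (1-θ) • u0) ⬝ᵥ d
      = θ*a11 + (1-2*θ)*a01 - (1-θ)*a00 := by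
    simp only [hd, Matrix.mulVec_add, Matrix.mulVec_smul, add_dotProduct,
      smul_dotProduct, dotProduct_sub, smul_eq_mul]
    rw [show A.mulVec u0 ⬝ᵥ u1 = a01 from h10]
    ring
  -- scheme dotted with d
  have hs : (1/τ) * m + (θ*a11 + (1-2*θ)*a01 - (1-θ)*a00) = fd := by
    have := congrArg (· ⬝ᵥ d) hscheme
    simp only [add_dotProduct, Matrix.mulVec_smul, smul_dotProduct, smul_eq_mul,
      hAexp] at this
    exact this
  have hs2 : m + τ*(θ*a11 + (1-2*θ)*a01 - (1-θ)*a00) = τ*fd := by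
    have h := congrArg (τ * ·) hs
    field_simp at h
    linarith
  -- A d ⬝ d ≥ 0
  have hAd : A.mulVec d ⬝ᵥ d = a11 - 2*a01 + a00 := by
    simp only [hd, Matrix.mulVec_sub, sub_dotProduct, dotProduct_sub]
    rw [show A.mulVec u0 ⬝ᵥ u1 = a01 from h10]
    ring
  have hAdnn : 0 ≤ a11 - 2*a01 + a00 := by
    rw [← hAd]
    simpa [dotProduct_comm] using hA.dotProduct_mulVec_nonneg d
  -- quadratic completion for the M part
  have hz : 0 ≤ m - τ*fd + (τ^2/4)*g := by
    have h0 := hMposd (d - (τ/2) • M⁻¹.mulVec F)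
    have hexp : M.mulVec (d - (τ/2) • M⁻¹.mulVec F) ⬝ᵥ (d - (τ/2) • M⁻¹.mulVec F)
        = m - τ*fd + (τ^2/4)*g := by
      simp only [Matrix.mulVec_sub, Matrix.mulVec_smul, hinv, sub_dotProduct,
        dotProduct_sub, dotProduct_smul, smul_dotProduct, smul_eq_mul]
      rw [show M.mulVec d ⬝ᵥ M⁻¹.mulVec F = F ⬝ᵥ d from by
        rw [hMsym d (M⁻¹.mulVec F), hinv],
        show F ⬝ᵥ M⁻¹.mulVec F = g from dotProduct_comm _ _]
      ring
    linarith [hexp ▸ h0]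
  nlinarith [mul_nonneg (mul_nonneg hτ.le (by linarith : (0:ℝ) ≤ θ - 1/2)) hAdnn,
    mul_pos hτ hτ, hs2, hz, hτ.le]
end

section
/- Let M = M^T > 0 and A = A^T ≥ 0 on R^N, τ > 0, and parameters μ ≥ 1/2 and σ ≥ (1-μ)/2. Define S = (1/τ)(μ - 1/2) M + (σ + (μ-1)/2) A. If u^{n+1}, u^n, u^{n-1} satisfy the three-level scheme M(μ(u^{n+1}-u^n)/τ + (1-μ)(u^n-u^{n-1})/τ) + A((σ+μ-1/2)u^{n+1} - (2σ+μ-3/2)u^n + σ u^{n-1}) = F, then (1/4)‖u^{n+1}+u^n‖_A² + ‖u^{n+1}-u^n‖_S² ≤ (1/4)‖u^n+u^{n-1}‖_A² + ‖u^n-u^{n-1}‖_S² + (τ/2)‖F‖²_{M^{-1}}. -/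
open Matrix

theorem three_level_implicit_stability
    (N : ℕ) (M A : Matrix (Fin N) (Fin N) ℝ)
    (hM : M.PosDef) (hA : A.PosSemidef)
    (τ μ σ : ℝ) (hτ : 0 < τ) (hμ : 1/2 ≤ μ) (hσ : (1-μ)/2 ≤ σ)
    (S : Matrix (Fin N) (Fin N) ℝ)
    (hS : S = (1/τ * (μ - 1/2)) • M + (σ + (μ-1)/2) • A)
    (u1 u0 um1 F : Fin N → ℝ)
    (hscheme : M.mulVec ((μ/τ) • (u1 - u0) + ((1-μ)/τ) • (u0 - um1))
        + A.mulVec ((σ + μ - 1/2) • u1 - (2*σ + μ - 3/2) • u0 + σ • um1) = F) :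
    (1/4) * (A.mulVec (u1 + u0) ⬝ᵥ (u1 + u0)) + S.mulVec (u1 - u0) ⬝ᵥ (u1 - u0)
      ≤ (1/4) * (A.mulVec (u0 + um1) ⬝ᵥ (u0 + um1)) + S.mulVec (u0 - um1) ⬝ᵥ (u0 - um1)
        + (τ/2) * (M⁻¹.mulVec F ⬝ᵥ F) := by
  have hMs : Mᵀ = M := hM.isHermitian
  have hAs : Aᵀ = A := hA.1
  have symdot : ∀ (B : Matrix (Fin N) (Fin N) ℝ), Bᵀ = B → ∀ x y : Fin N → ℝ,
      B *ᵥ x ⬝ᵥ y = B *ᵥ y ⬝ᵥ x := by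
    intro B h x y
    rw [dotProduct_comm, dotProduct_mulVec, ← mulVec_transpose, h]
  set g := M⁻¹ *ᵥ F with hg
  have hMg : M *ᵥ g = F := by
    rw [hg, mulVec_mulVec, Matrix.mul_nonsing_inv _ (isUnit_iff_ne_zero.mpr hM.det_pos.ne'),
      one_mulVec]
  have hqM : ∀ x, 0 ≤ M *ᵥ x ⬝ᵥ x := fun x => by
    simpa [dotProduct_comm] using hM.posSemidef.dotProduct_mulVec_nonneg x
  have hqA : ∀ x, 0 ≤ A *ᵥ x ⬝ᵥ x := fun x => by
    simpa [dotProduct_comm] using hA.dotProduct_mulVec_nonneg x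
  have sM01 : M *ᵥ u0 ⬝ᵥ u1 = M *ᵥ u1 ⬝ᵥ u0 := symdot M hMs u0 u1
  have sMm1 : M *ᵥ um1 ⬝ᵥ u1 = M *ᵥ u1 ⬝ᵥ um1 := symdot M hMs um1 u1
  have sMm0 : M *ᵥ um1 ⬝ᵥ u0 = M *ᵥ u0 ⬝ᵥ um1 := symdot M hMs um1 u0
  have sA01 : A *ᵥ u0 ⬝ᵥ u1 = A *ᵥ u1 ⬝ᵥ u0 := symdot A hAs u0 u1
  have sAm1 : A *ᵥ um1 ⬝ᵥ u1 = A *ᵥ u1 ⬝ᵥ um1 := symdot A hAs um1 u1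
  have sAm0 : A *ᵥ um1 ⬝ᵥ u0 = A *ᵥ u0 ⬝ᵥ um1 := symdot A hAs um1 u0
  have sMg1 : M *ᵥ u1 ⬝ᵥ g = F ⬝ᵥ u1 := by rw [symdot M hMs u1 g, hMg]
  have sMgm : M *ᵥ um1 ⬝ᵥ g = F ⬝ᵥ um1 := by rw [symdot M hMs um1 g, hMg]
  have sFg : F ⬝ᵥ g = g ⬝ᵥ F := dotProduct_comm _ _
  have key1 := congrArg (· ⬝ᵥ (u1 - um1)) hscheme
  simp only [mulVec_add, mulVec_sub, mulVec_smul, add_dotProduct, sub_dotProduct,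
    smul_dotProduct, dotProduct_sub, dotProduct_add, smul_eq_mul, sM01, sMm1, sMm0,
    sA01, sAm1, sAm0] at key1
  have hposM := hqM (u1 - um1 - τ • g)
  simp only [mulVec_sub, mulVec_smul, hMg, sub_dotProduct, dotProduct_sub,
    smul_dotProduct, dotProduct_smul, smul_eq_mul, sM01, sMm1, sMm0, sMg1, sMgm, sFg] at hposM
  have hposA := hqA (u1 - um1)
  simp only [mulVec_sub, sub_dotProduct, dotProduct_sub, sA01, sAm1, sAm0] at hposA
  rw [hS]
  simp only [add_mulVec, smul_mulVec, mulVec_add, mulVec_sub, add_dotProduct,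
    sub_dotProduct, smul_dotProduct, dotProduct_add, dotProduct_sub, smul_eq_mul,
    sM01, sMm1, sMm0, sA01, sAm1, sAm0]
  set m11 := M *ᵥ u1 ⬝ᵥ u1
  set m10 := M *ᵥ u1 ⬝ᵥ u0
  set m1m := M *ᵥ u1 ⬝ᵥ um1
  set m00 := M *ᵥ u0 ⬝ᵥ u0
  set m0m := M *ᵥ u0 ⬝ᵥ um1
  set mmm := M *ᵥ um1 ⬝ᵥ um1
  set a11 := A *ᵥ u1 ⬝ᵥ u1
  set a10 := A *ᵥ u1 ⬝ᵥ u0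
  set a1m := A *ᵥ u1 ⬝ᵥ um1
  set a00 := A *ᵥ u0 ⬝ᵥ u0
  set a0m := A *ᵥ u0 ⬝ᵥ um1
  set amm := A *ᵥ um1 ⬝ᵥ um1
  set f1 := F ⬝ᵥ u1
  set fm := F ⬝ᵥ um1
  set q := g ⬝ᵥ F
  have hτ0 : τ ≠ 0 := hτ.ne'
  have hinv : τ * τ⁻¹ = 1 := mul_inv_cancel₀ hτ0
  have key2 : μ*(m11-m10) + (1-μ)*(m10-m1m) - (μ*(m1m-m0m) + (1-μ)*(m0m-mmm))
      + τ*((σ+μ-1/2)*a11 - (2*σ+μ-3/2)*a10 + σ*a1m)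
      - τ*((σ+μ-1/2)*a1m - (2*σ+μ-3/2)*a0m + σ*amm) = τ*(f1 - fm) := by
    linear_combination τ * key1
      - (μ*(m11-m10) + (1-μ)*(m10-m1m) - μ*(m1m-m0m) - (1-μ)*(m0m-mmm)) * hinv
  have ID2 : 2*τ*( (1/4*(a00 + a0m + (a0m + amm)) +
      (1/τ*(μ-1/2)*m00 + (σ+(μ-1)/2)*a00 - (1/τ*(μ-1/2)*m0m + (σ+(μ-1)/2)*a0m)
        - (1/τ*(μ-1/2)*m0m + (σ+(μ-1)/2)*a0m - (1/τ*(μ-1/2)*mmm + (σ+(μ-1)/2)*amm)))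
      + τ/2*q)
      - (1/4*(a11 + a10 + (a10 + a00)) +
      (1/τ*(μ-1/2)*m11 + (σ+(μ-1)/2)*a11 - (1/τ*(μ-1/2)*m10 + (σ+(μ-1)/2)*a10)
        - (1/τ*(μ-1/2)*m10 + (σ+(μ-1)/2)*a10 - (1/τ*(μ-1/2)*m00 + (σ+(μ-1)/2)*a00)))))
      = (m11 - m1m - τ*f1 - (m1m - mmm - τ*fm) - τ*(f1 - fm - τ*q))
        + τ*(μ-1/2) * (a11 - a1m - (a1m - amm)) := by
    linear_combination (-2) * key2 + (-(4*μ*m0m) + 2*μ*mmm - 2*μ*m11 + 4*μ*m10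
      + 2*m0m - mmm + m11 - 2*m10) * hinv
  have h2' : 0 ≤ τ*(μ-1/2) * (a11 - a1m - (a1m - amm)) :=
    mul_nonneg (mul_nonneg hτ.le (by linarith)) hposA
  have h3 : 0 ≤ 2*τ*( (1/4*(a00 + a0m + (a0m + amm)) +
      (1/τ*(μ-1/2)*m00 + (σ+(μ-1)/2)*a00 - (1/τ*(μ-1/2)*m0m + (σ+(μ-1)/2)*a0m)
        - (1/τ*(μ-1/2)*m0m + (σ+(μ-1)/2)*a0m - (1/τ*(μ-1/2)*mmm + (σ+(μ-1)/2)*amm)))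
      + τ/2*q)
      - (1/4*(a11 + a10 + (a10 + a00)) +
      (1/τ*(μ-1/2)*m11 + (σ+(μ-1)/2)*a11 - (1/τ*(μ-1/2)*m10 + (σ+(μ-1)/2)*a10)
        - (1/τ*(μ-1/2)*m10 + (σ+(μ-1)/2)*a10 - (1/τ*(μ-1/2)*m00 + (σ+(μ-1)/2)*a00))))) := by
    rw [ID2]; exact add_nonneg hposM h2'
  have h4 := mul_nonneg (inv_nonneg.mpr (by linarith : (0:ℝ) ≤ 2*τ)) h3
  rw [inv_mul_cancel_left₀ (by positivity : (2*τ) ≠ (0:ℝ))] at h4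
  linarith [h4]
end

section
/- Let M = M^T > 0, A^{(1)} = (A^{(1)})^T, A^{(2)} = (A^{(2)})^T with A = A^{(1)}+A^{(2)} ≥ 0. Suppose μ ≥ 1/2 and (σ + (μ-1)/2) A^{(1)} - (μ/2) A^{(2)} ≥ 0. Define S = (1/τ)(μ-1/2) M + (σ + (μ-1)/2) A^{(1)} - (μ/2) A^{(2)}. If u^{n+1}, u^n, u^{n-1} satisfy M(μ(u^{n+1}-u^n)/τ + (1-μ)(u^n-u^{n-1})/τ) + A^{(1)}((σ+μ-1/2)u^{n+1} - (2σ+μ-3/2)u^n + σ u^{n-1}) + A^{(2)}((μ+1/2)u^n - (μ-1/2)u^{n-1}) = F, then (1/4)‖u^{n+1}+u^n‖_A² + ‖u^{n+1}-u^n‖_S² ≤ (1/4)‖u^n+u^{n-1}‖_A² + ‖u^n-u^{n-1}‖_S² + (τ/2)‖F‖²_{M^{-1}}. -/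
open Matrix

private lemma sdot {N : ℕ} {B : Matrix (Fin N) (Fin N) ℝ} (hB : B.IsSymm) (x y : Fin N → ℝ) :
    B.mulVec x ⬝ᵥ y = B.mulVec y ⬝ᵥ x := by
  rw [dotProduct_comm, dotProduct_mulVec, ← mulVec_transpose, hB.eq]

private lemma young {N : ℕ} {M : Matrix (Fin N) (Fin N) ℝ} (hM : M.PosDef)
    (x F : Fin N → ℝ) (τ : ℝ) (hτ : 0 < τ) :
    F ⬝ᵥ x ≤ 1/(2*τ) * (M.mulVec x ⬝ᵥ x) + τ/2 * (M⁻¹.mulVec F ⬝ᵥ F) := by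
  have hMs : M.IsSymm := by
    have := hM.isHermitian
    rwa [Matrix.IsHermitian, conjTranspose_eq_transpose_of_trivial] at this
  set g : Fin N → ℝ := M⁻¹.mulVec F with hg
  have hgF : M.mulVec g = F := by
    rw [hg, mulVec_mulVec, Matrix.mul_nonsing_inv _ ((Matrix.isUnit_iff_isUnit_det _).mp hM.isUnit), one_mulVec]
  have h0 : 0 ≤ M.mulVec (x - τ • g) ⬝ᵥ (x - τ • g) := by
    have := hM.posSemidef.dotProduct_mulVec_nonneg (x - τ • g)
    simpa [dotProduct_comm] using this
  have e1 : M.mulVec (x - τ • g) ⬝ᵥ (x - τ • g)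
      = M.mulVec x ⬝ᵥ x - 2*τ*(M.mulVec g ⬝ᵥ x) + τ^2*(M.mulVec g ⬝ᵥ g) := by
    simp only [mulVec_sub, Matrix.mulVec_smul, dotProduct_sub, sub_dotProduct,
      dotProduct_smul, smul_dotProduct, smul_eq_mul, sdot hMs x g]
    ring
  have e2 : M.mulVec g ⬝ᵥ x = F ⬝ᵥ x := by rw [hgF]
  have e3 : M.mulVec g ⬝ᵥ g = M⁻¹.mulVec F ⬝ᵥ F := by
    rw [hgF, dotProduct_comm]
  rw [e1, e2, e3] at h0
  have hpos : (0:ℝ) < 1/(2*τ) := by positivity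
  have h1 := mul_nonneg hpos.le h0
  have h2 : 1/(2*τ) * (M.mulVec x ⬝ᵥ x - 2*τ*(F ⬝ᵥ x) + τ^2*(M⁻¹.mulVec F ⬝ᵥ F))
      = 1/(2*τ) * (M.mulVec x ⬝ᵥ x) - F ⬝ᵥ x + τ/2 * (M⁻¹.mulVec F ⬝ᵥ F) := by
    field_simp
  linarith [h1, h2.ge, h2.le]


theorem three_level_imex_stability
    (N : ℕ) (M A1 A2 A : Matrix (Fin N) (Fin N) ℝ)
    (hM : M.PosDef) (hA1 : A1.IsSymm) (hA2 : A2.IsSymm)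
    (hAdef : A = A1 + A2) (hA : A.PosSemidef)
    (τ μ σ : ℝ) (hτ : 0 < τ) (hμ : 1/2 ≤ μ)
    (hcond : ((σ + (μ-1)/2) • A1 - (μ/2) • A2).PosSemidef)
    (S : Matrix (Fin N) (Fin N) ℝ)
    (hS : S = (1/τ * (μ - 1/2)) • M + (σ + (μ-1)/2) • A1 - (μ/2) • A2)
    (u1 u0 um1 F : Fin N → ℝ)
    (hscheme : M.mulVec ((μ/τ) • (u1 - u0) + ((1-μ)/τ) • (u0 - um1))
        + A1.mulVec ((σ + μ - 1/2) • u1 - (2*σ + μ - 3/2) • u0 + σ • um1)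
        + A2.mulVec ((μ + 1/2) • u0 - (μ - 1/2) • um1) = F) :
    (1/4) * (A.mulVec (u1 + u0) ⬝ᵥ (u1 + u0)) + S.mulVec (u1 - u0) ⬝ᵥ (u1 - u0)
      ≤ (1/4) * (A.mulVec (u0 + um1) ⬝ᵥ (u0 + um1)) + S.mulVec (u0 - um1) ⬝ᵥ (u0 - um1)
        + (τ/2) * (M⁻¹.mulVec F ⬝ᵥ F) := by
  have hMs : M.IsSymm := by
    have := hM.isHermitian
    rwa [Matrix.IsHermitian, conjTranspose_eq_transpose_of_trivial] at this
  -- scheme dotted with z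
  have hdot : (M.mulVec ((μ/τ) • (u1 - u0) + ((1-μ)/τ) • (u0 - um1))
        + A1.mulVec ((σ + μ - 1/2) • u1 - (2*σ + μ - 3/2) • u0 + σ • um1)
        + A2.mulVec ((μ + 1/2) • u0 - (μ - 1/2) • um1)) ⬝ᵥ (u1 - um1) = F ⬝ᵥ (u1 - um1) := by
    rw [hscheme]
  -- key energy identity
  have key : (1/4) * (A.mulVec (u1 + u0) ⬝ᵥ (u1 + u0)) + S.mulVec (u1 - u0) ⬝ᵥ (u1 - u0)
      = (1/4) * (A.mulVec (u0 + um1) ⬝ᵥ (u0 + um1)) + S.mulVec (u0 - um1) ⬝ᵥ (u0 - um1)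
        + (F ⬝ᵥ (u1 - um1)) - (1/(2*τ)) * (M.mulVec (u1 - um1) ⬝ᵥ (u1 - um1)) - ((2*μ-1)/4) * (A.mulVec (u1 - um1) ⬝ᵥ (u1 - um1)) := by
    subst hS hAdef
    simp only [Matrix.add_mulVec, Matrix.sub_mulVec, Matrix.smul_mulVec,
      mulVec_add, mulVec_sub, mulVec_smul, dotProduct_add, add_dotProduct,
      dotProduct_sub, sub_dotProduct, smul_dotProduct, dotProduct_smul, smul_eq_mul] at hdot ⊢
    simp only [sdot hMs u0 u1, sdot hMs um1 u1, sdot hMs um1 u0,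
        sdot hA1 u0 u1, sdot hA1 um1 u1, sdot hA1 um1 u0,
        sdot hA2 u0 u1, sdot hA2 um1 u1, sdot hA2 um1 u0] at hdot ⊢
    linear_combination hdot
  have hAz : 0 ≤ A.mulVec (u1 - um1) ⬝ᵥ (u1 - um1) := by
    have := hA.dotProduct_mulVec_nonneg (u1 - um1)
    simpa [dotProduct_comm] using this
  have hc : 0 ≤ (2*μ-1)/4 := by linarith
  have h4 : 0 ≤ (2*μ-1)/4 * (A.mulVec (u1 - um1) ⬝ᵥ (u1 - um1)) := mul_nonneg hc hAz
  have hy := young hM (u1 - um1) F τ hτ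
  linarith [key, hy, h4]
end
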